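/- Under the normal–normal data-generating distribution with the straPP transformation assumption β₀ = (σ₀/σ₁)β₁, the bias of the power-prior posterior-mean estimator is a fixed linear function of β₁: E[β̂_p] − β₁ = (Σ_p((1/σ₁²)X₁ᵀX₁ + (a₀/(σ₀σ₁))X₀ᵀX₀) − I)β₁, where I is the p×p identity matrix. -/

import Mathlib

open MeasureTheory ProbabilityTheory Matrix

noncomputable section

/-- The normal–normal data-generating distribution: the product probability measure on
`(Fin n₀ → ℝ) × (Fin n₁ → ℝ)` under which the components `Y₀ i ~ N((X₀ β₀) i, σ₀²)` and
`Y₁ i ~ N((X₁ β₁) i, σ₁²)` are all independent. -/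
def dataMeasure {n₀ n₁ p : ℕ} (X₀ : Matrix (Fin n₀) (Fin p) ℝ)
    (X₁ : Matrix (Fin n₁) (Fin p) ℝ) (σ₀ σ₁ : ℝ) (β₀ β₁ : Fin p → ℝ) :
    Measure ((Fin n₀ → ℝ) × (Fin n₁ → ℝ)) :=
  (Measure.pi fun i => gaussianReal (X₀.mulVec β₀ i) ((σ₀ ^ 2).toNNReal)).prod
    (Measure.pi fun i => gaussianReal (X₁.mulVec β₁ i) ((σ₁ ^ 2).toNNReal))

/-- The straPP posterior-mean estimator
`β̂_s = Σ_s((1/σ₁²)X₁ᵀY₁ + (a₀/(σ₀σ₁))X₀ᵀY₀)` with `Σ_s = σ₁²(X₁ᵀX₁ + a₀X₀ᵀX₀)⁻¹`. -/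
def strapEst {n₀ n₁ p : ℕ} (X₀ : Matrix (Fin n₀) (Fin p) ℝ)
    (X₁ : Matrix (Fin n₁) (Fin p) ℝ) (σ₀ σ₁ a₀ : ℝ)
    (y : (Fin n₀ → ℝ) × (Fin n₁ → ℝ)) : Fin p → ℝ :=
  (σ₁ ^ 2 • (X₁ᵀ * X₁ + a₀ • (X₀ᵀ * X₀))⁻¹).mulVec
    ((1 / σ₁ ^ 2) • X₁ᵀ.mulVec y.2 + (a₀ / (σ₀ * σ₁)) • X₀ᵀ.mulVec y.1)

/-- The power-prior posterior-mean estimator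
`β̂_p = Σ_p((1/σ₁²)X₁ᵀY₁ + (a₀/σ₀²)X₀ᵀY₀)` with
`Σ_p = ((1/σ₁²)X₁ᵀX₁ + (a₀/σ₀²)X₀ᵀX₀)⁻¹`. -/
def ppEst {n₀ n₁ p : ℕ} (X₀ : Matrix (Fin n₀) (Fin p) ℝ)
    (X₁ : Matrix (Fin n₁) (Fin p) ℝ) (σ₀ σ₁ a₀ : ℝ)
    (y : (Fin n₀ → ℝ) × (Fin n₁ → ℝ)) : Fin p → ℝ :=
  ((1 / σ₁ ^ 2) • (X₁ᵀ * X₁) + (a₀ / σ₀ ^ 2) • (X₀ᵀ * X₀))⁻¹.mulVec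
    ((1 / σ₁ ^ 2) • X₁ᵀ.mulVec y.2 + (a₀ / σ₀ ^ 2) • X₀ᵀ.mulVec y.1)

/-!
`β̂_p` is a linear function of the data, so its expectation is that linear function applied to
the mean `(X₀β₀, X₁β₁)` of the data. Under `β₀ = (σ₀/σ₁)β₁` the historical term carries the factor
`(a₀/σ₀²)(σ₀/σ₁) = a₀/(σ₀σ₁)`, which gives `E[β̂_p] = Σ_p((1/σ₁²)X₁ᵀX₁ + (a₀/(σ₀σ₁))X₀ᵀX₀)β₁`.
-/

open scoped NNReal

lemma integrable_id_pi_gaussianReal {ι : Type*} [Fintype ι] (m : ι → ℝ) (v : ι → ℝ≥0) :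
    Integrable id (Measure.pi fun i => gaussianReal (m i) (v i)) :=
  Integrable.of_eval fun _ => integrable_eval ((memLp_id_gaussianReal 1).integrable le_rfl)

lemma integral_id_pi_gaussianReal {ι : Type*} [Fintype ι] (m : ι → ℝ) (v : ι → ℝ≥0) :
    ∫ x, x ∂(Measure.pi fun i => gaussianReal (m i) (v i)) = m := by
  ext i
  rw [eval_integral (f := fun x => x) (integrable_id_pi_gaussianReal m v).eval, integral_eval,
    integral_id_gaussianReal]

lemma integrable_id_prod {E F : Type*} [NormedAddCommGroup E] [NormedAddCommGroup F]
    [MeasurableSpace E] [MeasurableSpace F] {μ : Measure E} {ν : Measure F}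
    [IsFiniteMeasure μ] [IsFiniteMeasure ν] (hμ : Integrable id μ) (hν : Integrable id ν) :
    Integrable id (μ.prod ν) :=
  (hμ.comp_fst ν).prodMk (hν.comp_snd μ)

lemma integral_id_prod {E F : Type*} [NormedAddCommGroup E] [NormedAddCommGroup F]
    [NormedSpace ℝ E] [NormedSpace ℝ F] [CompleteSpace E] [CompleteSpace F]
    [MeasurableSpace E] [MeasurableSpace F] {μ : Measure E} {ν : Measure F}
    [IsProbabilityMeasure μ] [IsProbabilityMeasure ν] (hμ : Integrable id μ)
    (hν : Integrable id ν) :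
    ∫ z, z ∂(μ.prod ν) = (∫ x, x ∂μ, ∫ y, y ∂ν) :=
  calc ∫ z, z ∂(μ.prod ν) = (∫ z, z.1 ∂(μ.prod ν), ∫ z, z.2 ∂(μ.prod ν)) :=
        integral_pair (hμ.comp_fst ν) (hν.comp_snd μ)
    _ = (∫ x, x ∂μ, ∫ y, y ∂ν) := by
        rw [integral_fun_fst (fun x => x), integral_fun_snd (fun y => y)]
        simp

lemma integrable_id_dataMeasure {n₀ n₁ p : ℕ} (X₀ : Matrix (Fin n₀) (Fin p) ℝ)
    (X₁ : Matrix (Fin n₁) (Fin p) ℝ) (σ₀ σ₁ : ℝ) (β₀ β₁ : Fin p → ℝ) :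
    Integrable id (dataMeasure X₀ X₁ σ₀ σ₁ β₀ β₁) :=
  integrable_id_prod (integrable_id_pi_gaussianReal _ _) (integrable_id_pi_gaussianReal _ _)

lemma integral_id_dataMeasure {n₀ n₁ p : ℕ} (X₀ : Matrix (Fin n₀) (Fin p) ℝ)
    (X₁ : Matrix (Fin n₁) (Fin p) ℝ) (σ₀ σ₁ : ℝ) (β₀ β₁ : Fin p → ℝ) :
    ∫ y, y ∂(dataMeasure X₀ X₁ σ₀ σ₁ β₀ β₁) = (X₀ *ᵥ β₀, X₁ *ᵥ β₁) := by
  rw [dataMeasure, integral_id_prod (integrable_id_pi_gaussianReal _ _)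
    (integrable_id_pi_gaussianReal _ _), integral_id_pi_gaussianReal, integral_id_pi_gaussianReal]

lemma integral_ppEst_apply {n₀ n₁ p : ℕ} (X₀ : Matrix (Fin n₀) (Fin p) ℝ)
    (X₁ : Matrix (Fin n₁) (Fin p) ℝ) (σ₀ σ₁ a₀ : ℝ) {μ : Measure ((Fin n₀ → ℝ) × (Fin n₁ → ℝ))}
    (hμ : Integrable id μ) (j : Fin p) :
    ∫ y, ppEst X₀ X₁ σ₀ σ₁ a₀ y j ∂μ = ppEst X₀ X₁ σ₀ σ₁ a₀ (∫ y, y ∂μ) j := by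
  let L : (Fin n₀ → ℝ) × (Fin n₁ → ℝ) →ₗ[ℝ] ℝ :=
    LinearMap.proj j ∘ₗ
      toLin' ((1 / σ₁ ^ 2) • (X₁ᵀ * X₁) + (a₀ / σ₀ ^ 2) • (X₀ᵀ * X₀))⁻¹ ∘ₗ
        ((1 / σ₁ ^ 2) • toLin' X₁ᵀ ∘ₗ LinearMap.snd ℝ _ _ +
          (a₀ / σ₀ ^ 2) • toLin' X₀ᵀ ∘ₗ LinearMap.fst ℝ _ _)
  have hL : ∀ y, L y = ppEst X₀ X₁ σ₀ σ₁ a₀ y j := fun y => by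
    simp [L, ppEst]
  simpa only [LinearMap.coe_toContinuousLinearMap', id_eq, hL] using
    (LinearMap.toContinuousLinearMap L).integral_comp_comm hμ

lemma ppEst_apply_straPP_mean {n₀ n₁ p : ℕ} (X₀ : Matrix (Fin n₀) (Fin p) ℝ)
    (X₁ : Matrix (Fin n₁) (Fin p) ℝ) (σ₀ σ₁ a₀ : ℝ) (β₁ : Fin p → ℝ) :
    ppEst X₀ X₁ σ₀ σ₁ a₀ (X₀ *ᵥ ((σ₀ / σ₁) • β₁), X₁ *ᵥ β₁)
      = (((1 / σ₁ ^ 2) • (X₁ᵀ * X₁) + (a₀ / σ₀ ^ 2) • (X₀ᵀ * X₀))⁻¹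
          * ((1 / σ₁ ^ 2) • (X₁ᵀ * X₁) + (a₀ / (σ₀ * σ₁)) • (X₀ᵀ * X₀))) *ᵥ β₁ := by
  have hcoef : a₀ / σ₀ ^ 2 * (σ₀ / σ₁) = a₀ / (σ₀ * σ₁) := by
    rcases eq_or_ne σ₀ 0 with rfl | hσ₀
    · simp
    · field_simp
  simp only [ppEst, ← mulVec_mulVec, Matrix.add_mulVec, Matrix.smul_mulVec, mulVec_smul,
    smul_smul, hcoef]

theorem pp_estimator_bias_general {n₀ n₁ p : ℕ}
    (X₀ : Matrix (Fin n₀) (Fin p) ℝ) (X₁ : Matrix (Fin n₁) (Fin p) ℝ)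
    (σ₀ σ₁ a₀ : ℝ)
    (β₁ : Fin p → ℝ)
    (μ : Measure ((Fin n₀ → ℝ) × (Fin n₁ → ℝ)))
    (hμ : μ = dataMeasure X₀ X₁ σ₀ σ₁ ((σ₀ / σ₁) • β₁) β₁) :
    ∀ j : Fin p,
      ∫ y, ppEst X₀ X₁ σ₀ σ₁ a₀ y j ∂μ - β₁ j
        = ((((1 / σ₁ ^ 2) • (X₁ᵀ * X₁) + (a₀ / σ₀ ^ 2) • (X₀ᵀ * X₀))⁻¹
            * ((1 / σ₁ ^ 2) • (X₁ᵀ * X₁) + (a₀ / (σ₀ * σ₁)) • (X₀ᵀ * X₀))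
            - 1).mulVec β₁) j := by
  intro j
  subst hμ
  rw [integral_ppEst_apply X₀ X₁ σ₀ σ₁ a₀ (integrable_id_dataMeasure ..) j,
    integral_id_dataMeasure, ppEst_apply_straPP_mean, sub_mulVec, one_mulVec, Pi.sub_apply]

/-- Under the normal–normal data-generating distribution with the straPP transformation
assumption `β₀ = (σ₀/σ₁)β₁`, the bias of the power-prior posterior-mean estimator is the
fixed linear function of `β₁`:
`E[β̂_p] − β₁ = (Σ_p((1/σ₁²)X₁ᵀX₁ + (a₀/(σ₀σ₁))X₀ᵀX₀) − I)β₁`. -/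
theorem pp_estimator_bias {n₀ n₁ p : ℕ}
    (X₀ : Matrix (Fin n₀) (Fin p) ℝ) (X₁ : Matrix (Fin n₁) (Fin p) ℝ)
    (σ₀ σ₁ a₀ : ℝ) (hσ₀ : 0 < σ₀) (hσ₁ : 0 < σ₁) (ha₀ : 0 < a₀) (ha₀' : a₀ ≤ 1)
    (hp : IsUnit ((1 / σ₁ ^ 2) • (X₁ᵀ * X₁) + (a₀ / σ₀ ^ 2) • (X₀ᵀ * X₀)).det)
    (β₁ : Fin p → ℝ)
    (μ : Measure ((Fin n₀ → ℝ) × (Fin n₁ → ℝ)))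
    (hμ : μ = dataMeasure X₀ X₁ σ₀ σ₁ ((σ₀ / σ₁) • β₁) β₁) :
    ∀ j : Fin p,
      ∫ y, ppEst X₀ X₁ σ₀ σ₁ a₀ y j ∂μ - β₁ j
        = ((((1 / σ₁ ^ 2) • (X₁ᵀ * X₁) + (a₀ / σ₀ ^ 2) • (X₀ᵀ * X₀))⁻¹
            * ((1 / σ₁ ^ 2) • (X₁ᵀ * X₁) + (a₀ / (σ₀ * σ₁)) • (X₀ᵀ * X₀))
            - 1).mulVec β₁) j :=
  pp_estimator_bias_general X₀ X₁ σ₀ σ₁ a₀ β₁ μ hμ
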